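/- Conversely, let Φ = [β_1,...,β_N] span ℝ^n with all β_i in an open half-space, and suppose a, b ∈ C(Φ) satisfy Π_Φ(a) + Π_Φ(b) = Π_Φ(a+b). Then there exists a big chamber c ⊂ C(Φ) with a, b ∈ closure(c). -/

import Mathlib

open Pointwise

/-- The cone generated by the subset `ν` of the list `Φ` of vectors. -/
def coneOn {N n : ℕ} (Φ : Fin N → Fin n → ℝ) (ν : Finset (Fin N)) :
    Set (Fin n → ℝ) :=
  {μ | ∃ t : Fin N → ℝ, (∀ i, 0 ≤ t i) ∧ (∀ i ∉ ν, t i = 0) ∧ μ = ∑ i, t i • Φ i}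

/-- The set of regular vectors: the complement of the union of the cones generated
by subsets of `Φ` of cardinality `< n`. -/
def creg {N n : ℕ} (Φ : Fin N → Fin n → ℝ) : Set (Fin n → ℝ) :=
  (⋃ ν ∈ {ν : Finset (Fin N) | ν.card < n}, coneOn Φ ν)ᶜ

/-- The partition polytope `Π_Φ(a)`. -/
def partitionPolytope {N n : ℕ} (Φ : Fin N → Fin n → ℝ) (a : Fin n → ℝ) :
    Set (Fin N → ℝ) :=
  {x | (∀ i, 0 ≤ x i) ∧ ∑ i, x i • Φ i = a}

namespace Stmt17Aux

variable {N n : ℕ} (Φ : Fin N → Fin n → ℝ)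

lemma mem_coneOn_iff {ν : Finset (Fin N)} {z : Fin n → ℝ} :
    z ∈ coneOn Φ ν ↔ ∃ t : Fin N → ℝ,
      (∀ i, 0 ≤ t i) ∧ (∀ i ∉ ν, t i = 0) ∧ z = ∑ i, t i • Φ i := Iff.rfl

lemma sum_eq_on {σ : Finset (Fin N)} {t : Fin N → ℝ} (ht : ∀ i ∉ σ, t i = 0)
    (f : Fin N → Fin n → ℝ) :
    ∑ i, t i • f i = ∑ i ∈ σ, t i • f i :=
  (Finset.sum_subset σ.subset_univ (fun x _ hx => by rw [ht x hx, zero_smul])).symm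

lemma coneOn_mono {ν ν' : Finset (Fin N)} (h : ν ⊆ ν') : coneOn Φ ν ⊆ coneOn Φ ν' := by
  rintro z ⟨t, h0, hs, rfl⟩
  exact ⟨t, h0, fun i hi => hs i (fun hh => hi (h hh)), rfl⟩

lemma coneOn_subset_span {ν : Finset (Fin N)} :
    coneOn Φ ν ⊆ (Submodule.span ℝ (Φ '' ↑ν) : Submodule ℝ (Fin n → ℝ)) := by
  rintro z ⟨t, h0, hs, rfl⟩
  rw [sum_eq_on hs Φ]
  exact Submodule.sum_mem _ fun i hi => Submodule.smul_mem _ _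
    (Submodule.subset_span ⟨i, hi, rfl⟩)

lemma rep_unique {σ : Finset (Fin N)}
    (hind : LinearIndependent ℝ (fun i : σ => Φ i))
    {t t' : Fin N → ℝ} (ht : ∀ i ∉ σ, t i = 0) (ht' : ∀ i ∉ σ, t' i = 0)
    (h : ∑ i, t i • Φ i = ∑ i, t' i • Φ i) : t = t' := by
  have key : ∀ i : σ, t ↑i - t' ↑i = 0 := by
    apply Fintype.linearIndependent_iff.mp hind (fun i => t ↑i - t' ↑i)
    have e1 : ∑ i : σ, (t ↑i - t' ↑i) • Φ ↑i
        = (∑ i, t i • Φ i) - ∑ i, t' i • Φ i := by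
      rw [sum_eq_on ht Φ, sum_eq_on ht' Φ, ← Finset.sum_sub_distrib,
        ← Finset.sum_attach σ (fun i => t i • Φ i - t' i • Φ i)]
      exact Finset.sum_congr rfl fun i _ => by rw [sub_smul]
    rw [e1, h, sub_self]
  funext i
  by_cases hi : i ∈ σ
  · have := key ⟨i, hi⟩; simpa [sub_eq_zero] using this
  · rw [ht i hi, ht' i hi]

lemma not_creg_of_mem {z : Fin n → ℝ} {ν : Finset (Fin N)} (hν : ν.card < n)
    (hz : z ∈ coneOn Φ ν) : z ∉ creg Φ := by
  intro hc
  exact hc (Set.mem_biUnion hν hz)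

lemma mem_creg_iff {z : Fin n → ℝ} :
    z ∈ creg Φ ↔ ∀ ν : Finset (Fin N), ν.card < n → z ∉ coneOn Φ ν := by
  simp [creg]

/-- The package of facts about a "basis subset" `σ`. -/
lemma bs_pkg (hn : 1 ≤ n) {σ : Finset (Fin N)} (hcard : σ.card = n)
    (hind : LinearIndependent ℝ (fun i : σ => Φ i)) :
    (Submodule.span ℝ (Φ '' ↑σ) = ⊤)
    ∧ (∀ z : Fin n → ℝ, ∃ d : Fin N → ℝ, (∀ i ∉ σ, d i = 0) ∧ z = ∑ i, d i • Φ i)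
    ∧ IsClosed (coneOn Φ σ)
    ∧ (∀ (t : Fin N → ℝ), (∀ i ∉ σ, t i = 0) → (∀ i ∈ σ, 0 < t i) →
        (∑ i, t i • Φ i) ∈ interior (coneOn Φ σ))
    ∧ (∀ z ∈ frontier (coneOn Φ σ), ∃ k ∈ σ, z ∈ coneOn Φ (σ.erase k)) := by
  haveI : Nonempty σ :=
    Finset.Nonempty.to_subtype (Finset.card_pos.mp (by omega))
  have hcard' : Fintype.card σ = Module.finrank ℝ (Fin n → ℝ) := by
    rw [Fintype.card_coe, hcard, Module.finrank_pi ℝ, Fintype.card_fin]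
  let e : Module.Basis σ ℝ (Fin n → ℝ) := basisOfLinearIndependentOfCardEqFinrank hind hcard'
  have he : ∀ i : σ, e i = Φ ↑i := fun i =>
    congrFun (coe_basisOfLinearIndependentOfCardEqFinrank hind hcard') i
  -- coordinates
  have key2 : ∀ z : Fin n → ℝ, z = ∑ i : σ, e.equivFun z i • Φ ↑i := by
    intro z
    have := e.equivFun.symm_apply_apply z
    rw [Module.Basis.equivFun_symm_apply] at this
    nth_rewrite 1 [← this]
    exact Finset.sum_congr rfl fun i _ => by rw [he i]
  have key1 : ∀ (z : Fin n → ℝ) (t : Fin N → ℝ), (∀ i ∉ σ, t i = 0) →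
      z = ∑ i, t i • Φ i → ∀ i : σ, e.equivFun z i = t ↑i := by
    intro z t hsupp hz i
    have hz' : z = e.equivFun.symm (fun i : σ => t ↑i) := by
      rw [Module.Basis.equivFun_symm_apply, hz, sum_eq_on hsupp Φ,
        ← Finset.sum_attach σ (fun i => t i • Φ i)]
      exact Finset.sum_congr rfl fun i _ => by rw [he i]
    rw [hz', e.equivFun.apply_symm_apply]
  have sum_dite : ∀ z : Fin n → ℝ,
      ∑ i, (if h : i ∈ σ then e.equivFun z ⟨i, h⟩ else 0) • Φ i = z := by
    intro z
    rw [sum_eq_on (fun i hi => dif_neg hi) Φ,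
      ← Finset.sum_coe_sort σ (fun i => (if h : i ∈ σ then e.equivFun z ⟨i, h⟩ else 0) • Φ i)]
    calc ∑ i : σ, (if h : (↑i : Fin N) ∈ σ then e.equivFun z ⟨↑i, h⟩ else 0) • Φ ↑i
        = ∑ i : σ, e.equivFun z i • Φ ↑i :=
          Finset.sum_congr rfl fun i _ => by rw [dif_pos i.2]
      _ = z := (key2 z).symm
  -- external representation
  have rep_any : ∀ z : Fin n → ℝ, ∃ d : Fin N → ℝ,
      (∀ i ∉ σ, d i = 0) ∧ z = ∑ i, d i • Φ i := fun z =>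
    ⟨fun i => if h : i ∈ σ then e.equivFun z ⟨i, h⟩ else 0,
      fun i hi => dif_neg hi, (sum_dite z).symm⟩
  -- membership iff coordinates nonneg
  have mem_iff : ∀ z : Fin n → ℝ, z ∈ coneOn Φ σ ↔ ∀ i : σ, 0 ≤ e.equivFun z i := by
    intro z
    constructor
    · rintro ⟨t, h0, hsupp, rfl⟩ i
      rw [key1 _ t hsupp rfl i]; exact h0 ↑i
    · intro hpos
      refine ⟨fun i => if h : i ∈ σ then e.equivFun z ⟨i, h⟩ else 0,
        fun i => ?_, fun i hi => dif_neg hi, (sum_dite z).symm⟩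
      dsimp only
      by_cases h : i ∈ σ
      · rw [dif_pos h]; exact hpos ⟨i, h⟩
      · rw [dif_neg h]
  -- continuity of coordinates
  have hcont : ∀ i : σ, Continuous (fun z => e.equivFun z i) := by
    intro i
    exact LinearMap.continuous_of_finiteDimensional
      ((LinearMap.proj i).comp e.equivFun.toLinearMap)
  have hclosed : IsClosed (coneOn Φ σ) := by
    have : coneOn Φ σ = ⋂ i : σ, {z : Fin n → ℝ | 0 ≤ e.equivFun z i} := by
      ext z; simp only [Set.mem_iInter, Set.mem_setOf_eq]; exact mem_iff z
    rw [this]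
    exact isClosed_iInter fun i => isClosed_le continuous_const (hcont i)
  have hUsub : (⋂ i : σ, {z : Fin n → ℝ | 0 < e.equivFun z i}) ⊆ interior (coneOn Φ σ) := by
    apply interior_maximal
    · intro z hz
      rw [mem_iff]
      exact fun i => le_of_lt (Set.mem_iInter.mp hz i)
    · exact isOpen_iInter_of_finite fun i => isOpen_lt continuous_const (hcont i)
  constructor
  · -- span top
    have him : Φ '' ↑σ = Set.range ⇑e := by
      rw [funext he]
      ext v
      constructor
      · rintro ⟨i, hi, rfl⟩; exact ⟨⟨i, hi⟩, rfl⟩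
      · rintro ⟨i, rfl⟩; exact ⟨↑i, i.2, rfl⟩
    rw [him]; exact e.span_eq
  refine ⟨rep_any, hclosed, ?_, ?_⟩
  · -- interior
    intro t hsupp hpos
    apply hUsub
    rw [Set.mem_iInter]
    intro i
    have := key1 _ t hsupp rfl i
    simp only [Set.mem_setOf_eq, this]
    exact hpos ↑i i.2
  · -- frontier
    intro z hz
    rw [hclosed.frontier_eq] at hz
    obtain ⟨hzmem, hznint⟩ := hz
    have : ¬ z ∈ ⋂ i : σ, {z : Fin n → ℝ | 0 < e.equivFun z i} := fun h => hznint (hUsub h)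
    rw [Set.mem_iInter] at this
    push_neg at this
    obtain ⟨i₀, hi₀⟩ := this
    rw [Set.mem_setOf_eq, not_lt] at hi₀
    have hz0 : e.equivFun z i₀ = 0 := le_antisymm hi₀ ((mem_iff z).mp hzmem i₀)
    refine ⟨↑i₀, i₀.2, ⟨fun i => if h : i ∈ σ then e.equivFun z ⟨i, h⟩ else 0,
      fun i => ?_, fun i hi => ?_, (sum_dite z).symm⟩⟩
    · dsimp only
      by_cases h : i ∈ σ
      · rw [dif_pos h]; exact (mem_iff z).mp hzmem ⟨i, h⟩
      · rw [dif_neg h]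
    · dsimp only
      by_cases h : i ∈ σ
      · have hieq : i = ↑i₀ := by
          by_contra hne
          exact hi (Finset.mem_erase.mpr ⟨hne, h⟩)
        rw [dif_pos h]
        have : (⟨i, h⟩ : σ) = i₀ := Subtype.ext hieq
        rw [this, hz0]
      · rw [dif_neg h]

lemma carath_aux (v : Fin n → ℝ) (hv : ∀ i, 0 < ∑ j, Φ i j * v j) :
    ∀ (m : ℕ) (s : Finset (Fin N)) (t : Fin N → ℝ), s.card ≤ m → (∀ i, 0 ≤ t i) →
      (∀ i ∉ s, t i = 0) →
      ∃ τ : Finset (Fin N), τ ⊆ s ∧ LinearIndependent ℝ (fun i : τ => Φ i) ∧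
        (∑ i, t i • Φ i) ∈ coneOn Φ τ := by
  intro m
  induction m with
  | zero =>
    intro s t hcard h0 hsupp
    have hs : s = ∅ := Finset.card_eq_zero.mp (Nat.le_zero.mp hcard)
    subst hs
    haveI : IsEmpty ((∅ : Finset (Fin N)) : Type) := by
      constructor; rintro ⟨i, hi⟩; exact absurd hi (Finset.notMem_empty i)
    exact ⟨∅, Finset.Subset.refl _, linearIndependent_empty_type, ⟨t, h0, hsupp, rfl⟩⟩
  | succ m ih =>
    intro s t hcard h0 hsupp
    by_cases hLI : LinearIndependent ℝ (fun i : s => Φ i)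
    · exact ⟨s, Finset.Subset.refl _, hLI, ⟨t, h0, hsupp, rfl⟩⟩
    · obtain ⟨g, hgsum, i₁, hg1⟩ := Fintype.not_linearIndependent_iff.mp hLI
      -- get a relation with a positive coefficient
      obtain ⟨g, hgsum, i₁, hg1⟩ :
          ∃ g : s → ℝ, ∑ i : s, g i • Φ ↑i = 0 ∧ ∃ i : s, 0 < g i := by
        rcases lt_trichotomy (g i₁) 0 with hneg | h0' | hpos
        · refine ⟨fun i => -g i, ?_, ⟨i₁, by simpa using neg_pos.mpr hneg⟩⟩
          have heq : ∑ i : s, (fun i => -g i) i • Φ ↑i = -∑ i : s, g i • Φ ↑i := by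
            rw [← Finset.sum_neg_distrib]
            exact Finset.sum_congr rfl fun i _ => by dsimp only; rw [neg_smul]
          rw [heq, hgsum, neg_zero]
        · exact absurd h0' hg1
        · exact ⟨g, hgsum, ⟨i₁, hpos⟩⟩
      set G : Fin N → ℝ := fun i => if h : i ∈ s then g ⟨i, h⟩ else 0 with hG
      have hGsupp : ∀ i ∉ s, G i = 0 := fun i hi => dif_neg hi
      have hGval : ∀ i : s, G ↑i = g i := by
        intro i
        rw [hG]
        dsimp only
        rw [dif_pos i.2]
      have hGsum : ∑ i, G i • Φ i = 0 := by
        rw [sum_eq_on hGsupp Φ, ← Finset.sum_coe_sort s (fun i => G i • Φ i), ← hgsum]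
        exact Finset.sum_congr rfl fun i _ => by rw [hGval i]
      have hi₁s : (↑i₁ : Fin N) ∈ s := i₁.2
      have hGi₁ : 0 < G ↑i₁ := by rw [hGval i₁]; exact hg1
      set F : Finset (Fin N) := s.filter (fun i => 0 < G i) with hF
      have hFne : F.Nonempty := ⟨↑i₁, Finset.mem_filter.mpr ⟨hi₁s, hGi₁⟩⟩
      obtain ⟨i₀, hi₀F, hi₀min⟩ := Finset.exists_min_image F (fun i => t i / G i) hFne
      have hi₀s : i₀ ∈ s := (Finset.mem_filter.mp hi₀F).1
      have hGi₀ : 0 < G i₀ := (Finset.mem_filter.mp hi₀F).2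
      set θ : ℝ := t i₀ / G i₀ with hθ
      have hθ0 : 0 ≤ θ := div_nonneg (h0 i₀) (le_of_lt hGi₀)
      set t' : Fin N → ℝ := fun i => t i - θ * G i with ht'
      have ht'0 : ∀ i, 0 ≤ t' i := by
        intro i
        rw [ht']
        dsimp only
        by_cases hiF : 0 < G i
        · by_cases his : i ∈ s
          · have : θ ≤ t i / G i := hi₀min i (Finset.mem_filter.mpr ⟨his, hiF⟩)
            have := (le_div_iff₀ hiF).mp this
            linarith
          · rw [hsupp i his, hGsupp i his]; simp
        · push_neg at hiF
          nlinarith [h0 i]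
      have ht'supp : ∀ i ∉ s.erase i₀, t' i = 0 := by
        intro i hi
        rw [ht']
        dsimp only
        by_cases his : i ∈ s
        · have : i = i₀ := by
            by_contra hne
            exact hi (Finset.mem_erase.mpr ⟨hne, his⟩)
          subst this
          rw [hθ]
          field_simp
          ring
        · rw [hsupp i his, hGsupp i his]; simp
      have hsum' : ∑ i, t' i • Φ i = ∑ i, t i • Φ i := by
        have : ∑ i, t' i • Φ i = ∑ i, t i • Φ i - θ • ∑ i, G i • Φ i := by
          rw [Finset.smul_sum, ← Finset.sum_sub_distrib]
          exact Finset.sum_congr rfl fun i _ => by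
            rw [ht']; dsimp only; rw [sub_smul, mul_smul]
        rw [this, hGsum, smul_zero, sub_zero]
      have hcard' : (s.erase i₀).card ≤ m := by
        rw [Finset.card_erase_of_mem hi₀s]
        omega
      obtain ⟨τ, hτsub, hτind, hτmem⟩ := ih (s.erase i₀) t' hcard' ht'0 ht'supp
      rw [hsum'] at hτmem
      exact ⟨τ, hτsub.trans (Finset.erase_subset i₀ s), hτind, hτmem⟩

lemma caratheodory (v : Fin n → ℝ) (hv : ∀ i, 0 < ∑ j, Φ i j * v j)
    {z : Fin n → ℝ} {ν : Finset (Fin N)} (hz : z ∈ coneOn Φ ν) :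
    ∃ τ : Finset (Fin N), τ ⊆ ν ∧ LinearIndependent ℝ (fun i : τ => Φ i) ∧
      z ∈ coneOn Φ τ := by
  obtain ⟨t, h0, hsupp, rfl⟩ := hz
  exact carath_aux Φ v hv ν.card ν t le_rfl h0 hsupp

lemma fv_sum (v : Fin n → ℝ) (t : Fin N → ℝ) :
    ∑ j, (∑ i, t i • Φ i) j * v j = ∑ i, t i * (∑ j, Φ i j * v j) := by
  have hcoord : ∀ j, (∑ i, t i • Φ i) j = ∑ i, t i * Φ i j := by
    intro j; rw [Finset.sum_apply]; rfl
  calc ∑ j, (∑ i, t i • Φ i) j * v j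
      = ∑ j, ∑ i, t i * Φ i j * v j := by
        refine Finset.sum_congr rfl fun j _ => ?_
        rw [hcoord j, Finset.sum_mul]
    _ = ∑ i, ∑ j, t i * Φ i j * v j := Finset.sum_comm
    _ = ∑ i, t i * (∑ j, Φ i j * v j) := by
        refine Finset.sum_congr rfl fun i _ => ?_
        rw [Finset.mul_sum]
        exact Finset.sum_congr rfl fun j _ => by ring

/-- The main exchange/pivot argument: a point that lies in a small cone cannot have
strictly positive coordinates in every feasible basis of a regular point `x`. -/
lemma claimD (hn : 1 ≤ n) (v : Fin n → ℝ) (hv : ∀ i, 0 < ∑ j, Φ i j * v j)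
    (x : Fin n → ℝ) (hxreg : x ∈ creg Φ)
    (σ₁ : Finset (Fin N)) (hσ₁c : σ₁.card = n)
    (hσ₁i : LinearIndependent ℝ (fun i : σ₁ => Φ i)) (hxσ₁ : x ∈ coneOn Φ σ₁)
    (y : Fin n → ℝ) (τ : Finset (Fin N)) (hτ : τ.card < n) (hy : y ∈ coneOn Φ τ)
    (hpos : ∀ σ : Finset (Fin N), σ.card = n → LinearIndependent ℝ (fun i : σ => Φ i) →
      x ∈ coneOn Φ σ →
      ∃ t : Fin N → ℝ, (∀ i ∈ σ, 0 < t i) ∧ (∀ i ∉ σ, t i = 0) ∧ y = ∑ i, t i • Φ i) :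
    False := by
  classical
  set w : Fin N → ℝ := fun i => if i ∈ τ then 0 else -1 with hw
  set Bx : Finset (Finset (Fin N)) := Finset.univ.filter
    (fun σ => σ.card = n ∧ LinearIndependent ℝ (fun i : σ => Φ i) ∧ x ∈ coneOn Φ σ) with hBx
  have hBxmem : ∀ σ, σ ∈ Bx ↔
      (σ.card = n ∧ LinearIndependent ℝ (fun i : σ => Φ i) ∧ x ∈ coneOn Φ σ) := by
    intro σ; rw [hBx, Finset.mem_filter]
    exact ⟨fun h => h.2, fun h => ⟨Finset.mem_univ σ, h⟩⟩
  have hBxne : Bx.Nonempty := ⟨σ₁, (hBxmem σ₁).mpr ⟨hσ₁c, hσ₁i, hxσ₁⟩⟩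
  set xt : Finset (Fin N) → Fin N → ℝ := fun σ =>
    if h : x ∈ coneOn Φ σ then ((mem_coneOn_iff Φ).mp h).choose else 0 with hxt
  have hxt_spec : ∀ σ, x ∈ coneOn Φ σ →
      (∀ i, 0 ≤ xt σ i) ∧ (∀ i ∉ σ, xt σ i = 0) ∧ x = ∑ i, xt σ i • Φ i := by
    intro σ h
    have hxtval : xt σ = ((mem_coneOn_iff Φ).mp h).choose := by
      rw [hxt]; dsimp only; rw [dif_pos h]
    rw [hxtval]
    exact ((mem_coneOn_iff Φ).mp h).choose_spec
  have hxt_pos : ∀ σ, σ ∈ Bx → ∀ k ∈ σ, 0 < xt σ k := by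
    intro σ hσ k hk
    obtain ⟨hc, hi, hx⟩ := (hBxmem σ).mp hσ
    obtain ⟨h0, hsupp, hsum⟩ := hxt_spec σ hx
    rcases lt_or_eq_of_le (h0 k) with h | h
    · exact h
    · exfalso
      have hcardlt : (σ.erase k).card < n := by
        rw [Finset.card_erase_of_mem hk, hc]; omega
      have hmem : x ∈ coneOn Φ (σ.erase k) := by
        refine ⟨xt σ, h0, fun i hi' => ?_, hsum⟩
        by_cases his : i ∈ σ
        · have : i = k := by
            by_contra hne; exact hi' (Finset.mem_erase.mpr ⟨hne, his⟩)
          subst this; exact h.symm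
        · exact hsupp i his
      exact not_creg_of_mem Φ hcardlt hmem hxreg
  set f : Finset (Fin N) → ℝ := fun σ => ∑ i ∈ σ, w i * xt σ i with hf
  obtain ⟨σh, hσhBx, hσhmax⟩ := Finset.exists_max_image Bx f hBxne
  obtain ⟨hσhc, hσhi, hxσh⟩ := (hBxmem σh).mp hσhBx
  obtain ⟨hspan_top, rep_any, hclosed, hint, hfront⟩ := bs_pkg Φ hn hσhc hσhi
  choose dd hdd_supp hdd_sum using rep_any
  set H : Fin N → ℝ := fun m => ∑ i ∈ σh, w i * dd (Φ m) i with hH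
  have hH_eq : ∀ m ∈ σh, H m = w m := by
    intro m hm
    have hdelta : dd (Φ m) = fun i => if i = m then (1:ℝ) else 0 := by
      have hsum' : ∑ i, (if i = m then (1:ℝ) else 0) • Φ i = Φ m := by
        rw [Finset.sum_eq_single m
          (fun i _ hne => by rw [if_neg hne, zero_smul])
          (fun hm' => absurd (Finset.mem_univ m) hm')]
        rw [if_pos rfl, one_smul]
      exact rep_unique Φ hσhi (hdd_supp (Φ m))
        (fun i hi => if_neg (fun he => hi (by rw [he]; exact hm)))
        (by rw [← hdd_sum (Φ m), hsum'])
    rw [hH]; dsimp only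
    rw [hdelta]
    have : ∀ i ∈ σh, w i * (if i = m then (1:ℝ) else 0) = if i = m then w i else 0 := by
      intro i _
      by_cases h : i = m
      · rw [if_pos h, if_pos h, mul_one]
      · rw [if_neg h, if_neg h, mul_zero]
    rw [Finset.sum_congr rfl this, Finset.sum_ite_eq' σh m w, if_pos hm]
  -- optimality of σh
  have hopt : ∀ j ∉ σh, w j ≤ H j := by
    intro j hj
    by_contra hlt
    push_neg at hlt
    obtain ⟨d, hdsupp, hdsum⟩ : ∃ d : Fin N → ℝ,
        (∀ i ∉ σh, d i = 0) ∧ Φ j = ∑ i, d i • Φ i := ⟨dd (Φ j), hdd_supp _, hdd_sum _⟩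
    have hdH : H j = ∑ i ∈ σh, w i * d i := by
      have hddj : dd (Φ j) = d :=
        rep_unique Φ hσhi (hdd_supp (Φ j)) hdsupp (by rw [← hdd_sum (Φ j), ← hdsum])
      rw [hH]; dsimp only; rw [hddj]
    have hdpos : ∃ i ∈ σh, 0 < d i := by
      by_contra hnone
      push_neg at hnone
      have hfv := fv_sum Φ v d
      rw [← hdsum] at hfv
      have h1 : ∑ j', Φ j j' * v j' ≤ 0 := by
        rw [hfv]
        apply Finset.sum_nonpos
        intro i _
        by_cases his : i ∈ σh
        · exact mul_nonpos_of_nonpos_of_nonneg (hnone i his) (le_of_lt (hv i))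
        · rw [hdsupp i his, zero_mul]
      exact absurd h1 (not_le.mpr (hv j))
    have hFpne : (σh.filter (fun i => 0 < d i)).Nonempty := by
      obtain ⟨i, hi, hdi⟩ := hdpos
      exact ⟨i, Finset.mem_filter.mpr ⟨hi, hdi⟩⟩
    obtain ⟨k, hkFp, hkmin⟩ := Finset.exists_min_image _ (fun i => xt σh i / d i) hFpne
    have hkσ : k ∈ σh := (Finset.mem_filter.mp hkFp).1
    have hdk : 0 < d k := (Finset.mem_filter.mp hkFp).2
    set r : ℝ := xt σh k / d k with hr
    have hr0 : 0 < r := div_pos (hxt_pos σh hσhBx k hkσ) hdk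
    have hrdk : r * d k = xt σh k := div_mul_cancel₀ _ (ne_of_gt hdk)
    set t' : Fin N → ℝ := fun i =>
      if i = j then r else if i ∈ σh.erase k then xt σh i - r * d i else 0 with ht'
    set σ' : Finset (Fin N) := insert j (σh.erase k) with hσ'
    have hjnek : j ∉ σh.erase k := fun h => hj (Finset.mem_of_mem_erase h)
    have hσ'c : σ'.card = n := by
      rw [hσ', Finset.card_insert_of_notMem hjnek, Finset.card_erase_of_mem hkσ, hσhc]
      omega
    have hTj : t' j = r := by rw [ht']; dsimp only; rw [if_pos rfl]
    have hTe : ∀ i ∈ σh.erase k, t' i = xt σh i - r * d i := by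
      intro i hi
      have hij : i ≠ j := fun he => hjnek (he ▸ hi)
      rw [ht']; dsimp only; rw [if_neg hij, if_pos hi]
    have ht'supp : ∀ i ∉ σ', t' i = 0 := by
      intro i hi
      have h1 : i ≠ j := fun he => hi (by rw [hσ', he]; exact Finset.mem_insert_self j _)
      have h2 : i ∉ σh.erase k := fun hmem =>
        hi (by rw [hσ']; exact Finset.mem_insert_of_mem hmem)
      rw [ht']; dsimp only; rw [if_neg h1, if_neg h2]
    have ht'0 : ∀ i, 0 ≤ t' i := by
      intro i
      by_cases hij : i = j
      · subst hij; rw [hTj]; exact le_of_lt hr0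
      · by_cases hie : i ∈ σh.erase k
        · rw [hTe i hie]
          by_cases hdi : 0 < d i
          · have hiσ : i ∈ σh := Finset.mem_of_mem_erase hie
            have hmin := hkmin i (Finset.mem_filter.mpr ⟨hiσ, hdi⟩)
            have := (le_div_iff₀ hdi).mp hmin
            linarith
          · push_neg at hdi
            have h0i := (hxt_spec σh hxσh).1 i
            nlinarith
        · rw [ht']; dsimp only; rw [if_neg hij, if_neg hie]
    have hsum_erase : ∀ (u : Fin N → ℝ), (∀ i ∉ σh, u i = 0) →
        ∑ i, u i • Φ i = u k • Φ k + ∑ i ∈ σh.erase k, u i • Φ i := by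
      intro u hu
      rw [sum_eq_on hu Φ]
      conv_lhs => rw [← Finset.insert_erase hkσ]
      rw [Finset.sum_insert (Finset.notMem_erase k σh)]
    have hPhij : Φ j = d k • Φ k + ∑ i ∈ σh.erase k, d i • Φ i := by
      rw [hdsum]; exact hsum_erase d hdsupp
    have hx_eq : x = xt σh k • Φ k + ∑ i ∈ σh.erase k, xt σh i • Φ i := by
      rw [(hxt_spec σh hxσh).2.2]
      exact hsum_erase (xt σh) ((hxt_spec σh hxσh).2.1)
    have ht'sum : ∑ i, t' i • Φ i = x := by
      rw [sum_eq_on ht'supp Φ, hσ', Finset.sum_insert hjnek, hTj]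
      rw [Finset.sum_congr rfl (fun i hi => by rw [hTe i hi, sub_smul])]
      rw [Finset.sum_sub_distrib, hPhij]
      have h1 : ∑ i ∈ σh.erase k, (r * d i) • Φ i = r • ∑ i ∈ σh.erase k, d i • Φ i := by
        rw [Finset.smul_sum]
        exact Finset.sum_congr rfl fun i _ => (smul_smul r (d i) (Φ i)).symm
      rw [h1, smul_add, smul_smul, hrdk, hx_eq]
      abel
    have hxσ' : x ∈ coneOn Φ σ' := ⟨t', ht'0, ht'supp, ht'sum.symm⟩
    have hks : Φ k ∈ Submodule.span ℝ (Φ '' ↑σ') := by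
      have h4 : Φ k = (d k)⁻¹ • (Φ j - ∑ i ∈ σh.erase k, d i • Φ i) := by
        rw [hPhij, add_sub_cancel_right, smul_smul, inv_mul_cancel₀ (ne_of_gt hdk), one_smul]
      rw [h4]
      apply Submodule.smul_mem
      apply Submodule.sub_mem
      · exact Submodule.subset_span ⟨j, by rw [hσ']; exact Finset.mem_insert_self j _, rfl⟩
      · apply Submodule.sum_mem
        intro i hi
        exact Submodule.smul_mem _ _ (Submodule.subset_span
          ⟨i, by rw [hσ']; exact Finset.mem_insert_of_mem hi, rfl⟩)
    have hrange : Set.range (fun i : σ' => Φ i) = Φ '' ↑σ' := by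
      ext u; constructor
      · rintro ⟨i, rfl⟩; exact ⟨↑i, i.2, rfl⟩
      · rintro ⟨i, hi, rfl⟩; exact ⟨⟨i, hi⟩, rfl⟩
    have htople : ⊤ ≤ Submodule.span ℝ (Set.range (fun i : σ' => Φ i)) := by
      rw [hrange, ← hspan_top, Submodule.span_le]
      rintro u ⟨i, hi, rfl⟩
      have hiσ : i ∈ σh := Finset.mem_coe.mp hi
      by_cases hik : i = k
      · subst hik; exact hks
      · exact Submodule.subset_span
          ⟨i, by rw [hσ']; exact Finset.mem_insert_of_mem (Finset.mem_erase.mpr ⟨hik, hiσ⟩), rfl⟩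
    have hσ'ind : LinearIndependent ℝ (fun i : σ' => Φ i) :=
      linearIndependent_of_top_le_span_of_card_eq_finrank htople
        (by rw [Fintype.card_coe, hσ'c, Module.finrank_pi ℝ, Fintype.card_fin])
    have hσ'Bx : σ' ∈ Bx := (hBxmem σ').mpr ⟨hσ'c, hσ'ind, hxσ'⟩
    have hxt'eq : xt σ' = t' := by
      apply rep_unique Φ hσ'ind ((hxt_spec σ' hxσ').2.1) ht'supp
      rw [← (hxt_spec σ' hxσ').2.2, ht'sum]
    -- objective values
    have hfσ' : f σ' = w j * r + ∑ i ∈ σh.erase k, w i * (xt σh i - r * d i) := by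
      rw [hf]; dsimp only
      rw [hxt'eq, hσ', Finset.sum_insert hjnek, hTj]
      congr 1
      exact Finset.sum_congr rfl fun i hi => by rw [hTe i hi]
    have hfσh : f σh = w k * xt σh k + ∑ i ∈ σh.erase k, w i * xt σh i := by
      rw [hf]; dsimp only
      exact (Finset.add_sum_erase σh (fun i => w i * xt σh i) hkσ).symm
    have hdHe : H j = w k * d k + ∑ i ∈ σh.erase k, w i * d i := by
      rw [hdH]
      conv_lhs => rw [← Finset.insert_erase hkσ]
      rw [Finset.sum_insert (Finset.notMem_erase k σh)]
    have hexp : ∑ i ∈ σh.erase k, w i * (xt σh i - r * d i)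
        = (∑ i ∈ σh.erase k, w i * xt σh i) - r * ∑ i ∈ σh.erase k, w i * d i := by
      rw [Finset.mul_sum, ← Finset.sum_sub_distrib]
      exact Finset.sum_congr rfl fun i _ => by ring
    have hle : f σ' ≤ f σh := hσhmax σ' hσ'Bx
    rw [hfσ', hexp, hfσh] at hle
    have hS : ∑ i ∈ σh.erase k, w i * d i = H j - w k * d k := by rw [hdHe]; ring
    rw [hS] at hle
    have hwk : w k * xt σh k = w k * (r * d k) := by rw [hrdk]
    rw [hwk] at hle
    nlinarith [mul_pos hr0 (sub_pos.mpr hlt)]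
  -- final contradiction: evaluate the objective on y in two ways
  obtain ⟨ty, hty_pos, hty_supp, hty_sum⟩ := hpos σh hσhc hσhi hxσh
  obtain ⟨c, hc0, hc_supp, hc_sum⟩ := hy
  set R : Fin N → ℝ := fun i => ∑ m, c m * dd (Φ m) i with hR
  have hRsupp : ∀ i ∉ σh, R i = 0 := by
    intro i hi; rw [hR]; dsimp only
    exact Finset.sum_eq_zero fun m _ => by rw [hdd_supp (Φ m) i hi, mul_zero]
  have hRsum : ∑ i, R i • Φ i = y := by
    calc ∑ i, R i • Φ i = ∑ i, ∑ m, (c m * dd (Φ m) i) • Φ i := by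
          refine Finset.sum_congr rfl fun i _ => ?_
          rw [hR]; dsimp only; rw [Finset.sum_smul]
      _ = ∑ m, ∑ i, (c m * dd (Φ m) i) • Φ i := Finset.sum_comm
      _ = ∑ m, c m • ∑ i, dd (Φ m) i • Φ i := by
          refine Finset.sum_congr rfl fun m _ => ?_
          rw [Finset.smul_sum]
          exact Finset.sum_congr rfl fun i _ => by rw [mul_smul]
      _ = ∑ m, c m • Φ m := by
          refine Finset.sum_congr rfl fun m _ => ?_
          rw [← hdd_sum (Φ m)]
      _ = y := hc_sum.symm
  have hRy : ty = R :=
    rep_unique Φ hσhi hty_supp hRsupp (by rw [← hty_sum, hRsum])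
  have hV_nonneg : 0 ≤ ∑ i ∈ σh, w i * ty i := by
    have hVeq : ∑ i ∈ σh, w i * ty i = ∑ m, c m * H m := by
      rw [hRy]
      calc ∑ i ∈ σh, w i * R i
          = ∑ i ∈ σh, ∑ m, c m * (w i * dd (Φ m) i) := by
            refine Finset.sum_congr rfl fun i _ => ?_
            rw [hR]; dsimp only; rw [Finset.mul_sum]
            exact Finset.sum_congr rfl fun m _ => by ring
        _ = ∑ m, ∑ i ∈ σh, c m * (w i * dd (Φ m) i) := Finset.sum_comm
        _ = ∑ m, c m * H m := by
            refine Finset.sum_congr rfl fun m _ => ?_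
            rw [hH]; dsimp only; rw [Finset.mul_sum]
    rw [hVeq]
    apply Finset.sum_nonneg
    intro m _
    by_cases hcm : c m = 0
    · rw [hcm, zero_mul]
    · have hmτ : m ∈ τ := by
        by_contra h; exact hcm (hc_supp m h)
      have hwm : w m = 0 := by rw [hw]; dsimp only; rw [if_pos hmτ]
      have hHm : 0 ≤ H m := by
        by_cases hmσ : m ∈ σh
        · rw [hH_eq m hmσ, hwm]
        · have := hopt m hmσ; rw [hwm] at this; exact this
      exact mul_nonneg (hc0 m) hHm
  have hV_neg : ∑ i ∈ σh, w i * ty i < 0 := by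
    obtain ⟨i₀, hi₀σ, hi₀τ⟩ : ∃ i₀ ∈ σh, i₀ ∉ τ := by
      by_contra h
      push_neg at h
      have hsub : σh ⊆ τ := fun i hi => h i hi
      have := Finset.card_le_card hsub
      omega
    conv_lhs => rw [← Finset.insert_erase hi₀σ]
    rw [Finset.sum_insert (Finset.notMem_erase i₀ σh)]
    have h1 : w i₀ * ty i₀ < 0 := by
      rw [hw]; dsimp only; rw [if_neg hi₀τ]
      have := hty_pos i₀ hi₀σ
      linarith
    have h2 : ∑ i ∈ σh.erase i₀, w i * ty i ≤ 0 := by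
      apply Finset.sum_nonpos
      intro i hi
      have hiσ : i ∈ σh := Finset.mem_of_mem_erase hi
      have h3 : 0 < ty i := hty_pos i hiσ
      rw [hw]; dsimp only
      by_cases hiτ : i ∈ τ
      · rw [if_pos hiτ, zero_mul]
      · rw [if_neg hiτ]; linarith
    linarith
  linarith

lemma rep_pos {x : Fin n → ℝ} (hxreg : x ∈ creg Φ) {σ : Finset (Fin N)} (hσc : σ.card = n)
    {t : Fin N → ℝ} (h0 : ∀ i, 0 ≤ t i) (hsupp : ∀ i ∉ σ, t i = 0)
    (hteq : x = ∑ i, t i • Φ i) :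
    ∀ k ∈ σ, 0 < t k := by
  intro k hk
  rcases lt_or_eq_of_le (h0 k) with h | h
  · exact h
  · exfalso
    have hpos : 0 < σ.card := Finset.card_pos.mpr ⟨k, hk⟩
    have hcardlt : (σ.erase k).card < n := by
      rw [Finset.card_erase_of_mem hk]; omega
    have hmem : x ∈ coneOn Φ (σ.erase k) := by
      refine ⟨t, h0, fun i hi' => ?_, hteq⟩
      by_cases his : i ∈ σ
      · have : i = k := by
          by_contra hne; exact hi' (Finset.mem_erase.mpr ⟨hne, his⟩)
        subst this; exact h.symm
      · exact hsupp i his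
    exact not_creg_of_mem Φ hcardlt hmem hxreg

lemma inherit {a b : Fin n → ℝ}
    (hsum : partitionPolytope Φ a + partitionPolytope Φ b = partitionPolytope Φ (a + b)) :
    ∀ ν : Finset (Fin N), a + b ∈ coneOn Φ ν → a ∈ coneOn Φ ν ∧ b ∈ coneOn Φ ν := by
  rintro ν ⟨t, h0, hsupp, hteq⟩
  have ht : t ∈ partitionPolytope Φ (a + b) := ⟨h0, hteq.symm⟩
  rw [← hsum] at ht
  obtain ⟨p, hp, q, hq, hpq⟩ := Set.mem_add.mp ht
  obtain ⟨hp0, hpsum⟩ := hp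
  obtain ⟨hq0, hqsum⟩ := hq
  have hkey : ∀ i ∉ ν, p i = 0 ∧ q i = 0 := by
    intro i hi
    have h1 : p i + q i = 0 := by
      rw [← hsupp i hi, ← hpq]; rfl
    constructor <;> [skip; skip] <;> linarith [hp0 i, hq0 i]
  exact ⟨⟨p, hp0, fun i hi => (hkey i hi).1, hpsum.symm⟩,
    ⟨q, hq0, fun i hi => (hkey i hi).2, hqsum.symm⟩⟩

lemma card_eq_n_of_basisSet (hn : 1 ≤ n) {σ : Finset (Fin N)}
    (hind : LinearIndependent ℝ (fun i : σ => Φ i)) : σ.card ≤ n := by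
  have := hind.fintype_card_le_finrank
  rwa [Fintype.card_coe, Module.finrank_pi ℝ, Fintype.card_fin] at this

lemma exists_basisSet (hspan : Submodule.span ℝ (Set.range Φ) = ⊤) (hn : 1 ≤ n) :
    ∃ σ₀ : Finset (Fin N), σ₀.card = n ∧ LinearIndependent ℝ (fun i : σ₀ => Φ i) := by
  classical
  set T : Finset (Finset (Fin N)) := Finset.univ.filter
    (fun σ => LinearIndependent ℝ (fun i : σ => Φ i)) with hT
  have hTne : T.Nonempty := by
    refine ⟨∅, Finset.mem_filter.mpr ⟨Finset.mem_univ _, ?_⟩⟩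
    haveI : IsEmpty ((∅ : Finset (Fin N)) : Type) :=
      ⟨fun i => absurd i.2 (Finset.notMem_empty _)⟩
    exact linearIndependent_empty_type
  obtain ⟨σ₀, hσ₀T, hσ₀max⟩ := Finset.exists_max_image T (fun σ => σ.card) hTne
  have hσ₀ind : LinearIndependent ℝ (fun i : σ₀ => Φ i) := (Finset.mem_filter.mp hσ₀T).2
  have hspan₀ : Submodule.span ℝ (Φ '' ↑σ₀) = ⊤ := by
    by_contra hne
    have hj : ∃ j, Φ j ∉ Submodule.span ℝ (Φ '' ↑σ₀) := by
      by_contra hall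
      push_neg at hall
      apply hne
      rw [← top_le_iff, ← hspan, Submodule.span_le]
      rintro z ⟨j, rfl⟩
      exact hall j
    obtain ⟨j, hjs⟩ := hj
    have hjσ₀ : j ∉ σ₀ := fun h => hjs (Submodule.subset_span ⟨j, h, rfl⟩)
    set σ' : Finset (Fin N) := insert j σ₀ with hσ'
    have hind' : LinearIndependent ℝ (fun i : σ' => Φ i) := by
      by_contra hdep
      obtain ⟨g, hgsum, i₁, hg1⟩ := Fintype.not_linearIndependent_iff.mp hdep
      set G : Fin N → ℝ := fun i => if h : i ∈ σ' then g ⟨i, h⟩ else 0 with hG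
      have hGval : ∀ i : σ', G ↑i = g i := by
        intro i; rw [hG]; dsimp only; rw [dif_pos i.2]
      have hGsupp : ∀ i ∉ σ', G i = 0 := fun i hi => dif_neg hi
      have hGsum : ∑ i, G i • Φ i = 0 := by
        rw [sum_eq_on hGsupp Φ, ← Finset.sum_coe_sort σ' (fun i => G i • Φ i), ← hgsum]
        exact Finset.sum_congr rfl fun i _ => by rw [hGval i]
      by_cases hGj : G j = 0
      · have hGsupp₀ : ∀ i ∉ σ₀, G i = 0 := by
          intro i hi
          by_cases hij : i = j
          · subst hij; exact hGj
          · refine hGsupp i (fun hmem => ?_)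
            rcases Finset.mem_insert.mp hmem with h | h
            · exact hij h
            · exact hi h
        have hzero : G = fun _ => (0:ℝ) := by
          apply rep_unique Φ hσ₀ind hGsupp₀ (fun i _ => rfl)
          rw [hGsum]
          exact (Finset.sum_eq_zero fun i _ => by rw [zero_smul]).symm
        have : G ↑i₁ = g i₁ := hGval i₁
        rw [hzero] at this
        exact hg1 this.symm
      · apply hjs
        have hins : ∑ i, G i • Φ i = G j • Φ j + ∑ i ∈ σ₀, G i • Φ i := by
          rw [sum_eq_on hGsupp Φ, hσ', Finset.sum_insert hjσ₀]
        have hPhij : Φ j = (-(G j)⁻¹) • ∑ i ∈ σ₀, G i • Φ i := by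
          have h5 : G j • Φ j = -∑ i ∈ σ₀, G i • Φ i := by
            rw [hGsum] at hins
            linear_combination (norm := module) -hins
          rw [← one_smul ℝ (Φ j), ← inv_mul_cancel₀ hGj, mul_smul, h5]
          rw [smul_neg, neg_smul]
        rw [hPhij]
        apply Submodule.smul_mem
        apply Submodule.sum_mem
        intro i hi
        exact Submodule.smul_mem _ _ (Submodule.subset_span ⟨i, hi, rfl⟩)
    have hσ'T : σ' ∈ T := Finset.mem_filter.mpr ⟨Finset.mem_univ _, hind'⟩
    have hcontr := hσ₀max σ' hσ'T
    rw [hσ', Finset.card_insert_of_notMem hjσ₀] at hcontr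
    omega
  have hle : σ₀.card ≤ n := card_eq_n_of_basisSet Φ hn hσ₀ind
  have hge : n ≤ σ₀.card := by
    have h1 := finrank_span_finset_le_card (R := ℝ) (σ₀.image Φ)
    rw [Set.finrank, Finset.coe_image, hspan₀, finrank_top, Module.finrank_pi ℝ,
      Fintype.card_fin] at h1
    exact le_trans h1 Finset.card_image_le
  exact ⟨σ₀, le_antisymm hle hge, hσ₀ind⟩

lemma exists_generic (hn : 1 ≤ n)
    (σ₀ : Finset (Fin N)) (hσ₀c : σ₀.card = n)
    (hσ₀i : LinearIndependent ℝ (fun i : σ₀ => Φ i)) :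
    ∃ u : Fin n → ℝ, u ∈ coneOn Φ Finset.univ ∧
      ∀ ν : Finset (Fin N), ν.card < n →
        u ∉ (Submodule.span ℝ (Φ '' ↑ν) : Submodule ℝ (Fin n → ℝ)) := by
  classical
  obtain ⟨_, _, _, hint, _⟩ := bs_pkg Φ hn hσ₀c hσ₀i
  have hqint : (∑ i, (if i ∈ σ₀ then (1:ℝ) else 0) • Φ i) ∈ interior (coneOn Φ σ₀) :=
    hint _ (fun i hi => if_neg hi) (fun i hi => by rw [if_pos hi]; norm_num)
  have hvol : 0 < MeasureTheory.volume (interior (coneOn Φ σ₀)) :=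
    isOpen_interior.measure_pos MeasureTheory.volume ⟨_, hqint⟩
  have hbad0 : MeasureTheory.volume (⋃ ν ∈ {ν : Finset (Fin N) | ν.card < n},
      ((Submodule.span ℝ (Φ '' ↑ν) : Submodule ℝ (Fin n → ℝ)) : Set (Fin n → ℝ))) = 0 := by
    rw [MeasureTheory.measure_biUnion_null_iff (Set.to_countable _)]
    intro ν hν
    apply MeasureTheory.Measure.addHaar_submodule
    intro htop
    have h1 := finrank_span_finset_le_card (R := ℝ) (ν.image Φ)
    rw [Set.finrank, Finset.coe_image, htop, finrank_top, Module.finrank_pi ℝ,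
      Fintype.card_fin] at h1
    have h2 := Finset.card_image_le (s := ν) (f := Φ)
    have h3 : ν.card < n := hν
    omega
  obtain ⟨u, hu⟩ : (interior (coneOn Φ σ₀) \ ⋃ ν ∈ {ν : Finset (Fin N) | ν.card < n},
      ((Submodule.span ℝ (Φ '' ↑ν) : Submodule ℝ (Fin n → ℝ)) : Set (Fin n → ℝ))).Nonempty := by
    by_contra h
    rw [Set.not_nonempty_iff_eq_empty, Set.diff_eq_empty] at h
    have := MeasureTheory.measure_mono (μ := MeasureTheory.volume) h
    rw [hbad0] at this
    exact absurd (le_antisymm this zero_le) (ne_of_gt hvol)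
  refine ⟨u, coneOn_mono Φ (Finset.subset_univ σ₀) (interior_subset hu.1), ?_⟩
  intro ν hν hmem
  exact hu.2 (Set.mem_biUnion hν hmem)

end Stmt17Aux

open Stmt17Aux in
theorem stmt17 (n N : ℕ) (Φ : Fin N → Fin n → ℝ)
    (hspan : Submodule.span ℝ (Set.range Φ) = ⊤)
    (hhalf : ∃ v : Fin n → ℝ, ∀ i, 0 < ∑ j, Φ i j * v j)
    (a b : Fin n → ℝ) (ha : a ∈ coneOn Φ Finset.univ) (hb : b ∈ coneOn Φ Finset.univ)
    (hsum : partitionPolytope Φ a + partitionPolytope Φ b = partitionPolytope Φ (a + b)) :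
    ∃ (c : Set (Fin n → ℝ)) (x : Fin n → ℝ), x ∈ creg Φ ∧
      c = connectedComponentIn (creg Φ) x ∧ c ⊆ coneOn Φ Finset.univ ∧
      a ∈ closure c ∧ b ∈ closure c := by
  classical
  rcases Nat.eq_zero_or_pos n with hn0 | hn
  · subst hn0
    have hcreg : creg Φ = Set.univ := by
      have h0 : creg Φ = (⋃ ν ∈ {ν : Finset (Fin N) | ν.card < 0}, coneOn Φ ν)ᶜ := rfl
      have h1 : {ν : Finset (Fin N) | ν.card < 0} = ∅ := by ext ν; simp
      rw [h0, h1]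
      simp
    have hx : (0 : Fin 0 → ℝ) ∈ creg Φ := by rw [hcreg]; trivial
    haveI : Subsingleton (Fin 0 → ℝ) := ⟨fun f g => funext fun i => i.elim0⟩
    refine ⟨connectedComponentIn (creg Φ) 0, 0, hx, rfl, ?_, ?_, ?_⟩
    · intro z _
      exact ⟨0, fun i => le_refl 0, fun i _ => rfl, Subsingleton.elim _ _⟩
    · rw [Subsingleton.elim a (0 : Fin 0 → ℝ)]
      exact subset_closure (mem_connectedComponentIn hx)
    · rw [Subsingleton.elim b (0 : Fin 0 → ℝ)]
      exact subset_closure (mem_connectedComponentIn hx)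
  -- main case
  obtain ⟨v, hv⟩ := hhalf
  have hsC : a + b ∈ coneOn Φ Finset.univ := by
    obtain ⟨ta, ha0, _, haeq⟩ := ha
    obtain ⟨tb, hb0, _, hbeq⟩ := hb
    refine ⟨ta + tb, fun i => add_nonneg (ha0 i) (hb0 i),
      fun i hi => absurd (Finset.mem_univ i) hi, ?_⟩
    rw [haeq, hbeq, ← Finset.sum_add_distrib]
    exact Finset.sum_congr rfl fun i _ => by rw [Pi.add_apply, add_smul]
  have hinh := inherit Φ hsum
  obtain ⟨σ₀, hσ₀c, hσ₀i⟩ := exists_basisSet Φ hspan hn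
  obtain ⟨u, huC, hugen⟩ := exists_generic Φ hn σ₀ hσ₀c hσ₀i
  set T : Set ℝ := {δ : ℝ | 0 < δ ∧ ∃ ν : Finset (Fin N), ν.card < n ∧
      a + b + δ • u ∈ (Submodule.span ℝ (Φ '' ↑ν) : Submodule ℝ (Fin n → ℝ))} with hTdef
  have hTfin : T.Finite := by
    apply Set.Finite.subset (Set.finite_iUnion (f := fun ν : Finset (Fin N) =>
      {δ : ℝ | ν.card < n ∧
        a + b + δ • u ∈ (Submodule.span ℝ (Φ '' ↑ν) : Submodule ℝ (Fin n → ℝ))}) ?_)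
    · rintro δ ⟨hδ, ν, h1, h2⟩
      exact Set.mem_iUnion.mpr ⟨ν, h1, h2⟩
    · intro ν
      apply Set.Subsingleton.finite
      rintro δ₁ ⟨hν, h1⟩ δ₂ ⟨_, h2⟩
      by_contra hne
      apply hugen ν hν
      have hdiff : (δ₁ - δ₂) • u ∈ Submodule.span ℝ (Φ '' ↑ν) := by
        have h3 := Submodule.sub_mem _ h1 h2
        have h4 : a + b + δ₁ • u - (a + b + δ₂ • u) = (δ₁ - δ₂) • u := by module
        rwa [h4] at h3
      have h5 : u = (δ₁ - δ₂)⁻¹ • ((δ₁ - δ₂) • u) := by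
        rw [smul_smul, inv_mul_cancel₀ (sub_ne_zero.mpr hne), one_smul]
      rw [h5]
      exact Submodule.smul_mem _ _ hdiff
  obtain ⟨ε, hε0, hεT⟩ : ∃ ε : ℝ, 0 < ε ∧ ∀ δ : ℝ, 0 < δ → δ ≤ ε → δ ∉ T := by
    rcases Set.eq_empty_or_nonempty T with h | h
    · exact ⟨1, one_pos, fun δ _ _ hδ => by rw [h] at hδ; exact hδ⟩
    · have hT'ne : hTfin.toFinset.Nonempty := by
        rwa [Set.Finite.toFinset_nonempty]
      have hmT : hTfin.toFinset.min' hT'ne ∈ T := by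
        have := hTfin.toFinset.min'_mem hT'ne
        rwa [Set.Finite.mem_toFinset] at this
      have hm0 : 0 < hTfin.toFinset.min' hT'ne := hmT.1
      refine ⟨hTfin.toFinset.min' hT'ne / 2, by linarith, fun δ h1 h2 hδT => ?_⟩
      have : hTfin.toFinset.min' hT'ne ≤ δ :=
        hTfin.toFinset.min'_le δ (by rwa [Set.Finite.mem_toFinset])
      linarith
  have hseg : ∀ δ : ℝ, 0 < δ → δ ≤ ε → (a + b + δ • u) ∈ creg Φ := by
    intro δ h1 h2
    rw [mem_creg_iff]
    intro ν hν hmem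
    exact hεT δ h1 h2 ⟨h1, ν, hν, coneOn_subset_span Φ hmem⟩
  set x : Fin n → ℝ := a + b + ε • u with hxdef
  have hxreg : x ∈ creg Φ := hseg ε hε0 le_rfl
  have hxC : x ∈ coneOn Φ Finset.univ := by
    obtain ⟨ts, hs0, _, hseq⟩ := hsC
    obtain ⟨tu, hu0, _, hueq⟩ := huC
    refine ⟨fun i => ts i + ε * tu i,
      fun i => add_nonneg (hs0 i) (mul_nonneg (le_of_lt hε0) (hu0 i)),
      fun i hi => absurd (Finset.mem_univ i) hi, ?_⟩
    rw [hxdef, hseq, hueq, Finset.smul_sum, ← Finset.sum_add_distrib]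
    exact Finset.sum_congr rfl fun i _ => by rw [add_smul, mul_smul]
  obtain ⟨τx, _, hτxi, hxτx⟩ := caratheodory Φ v hv hxC
  have hτxc : τx.card = n := by
    have hle := card_eq_n_of_basisSet Φ hn hτxi
    rcases lt_or_eq_of_le hle with h | h
    · exact absurd hxreg (not_creg_of_mem Φ h hxτx)
    · exact h
  set c : Set (Fin n → ℝ) := connectedComponentIn (creg Φ) x with hcdef
  have hcx : x ∈ c := mem_connectedComponentIn hxreg
  have hcsub : c ⊆ creg Φ := connectedComponentIn_subset _ _
  have hcconn : IsPreconnected c := isPreconnected_connectedComponentIn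
  have hchamber : ∀ σ : Finset (Fin N), σ.card = n →
      LinearIndependent ℝ (fun i : σ => Φ i) → x ∈ coneOn Φ σ →
      c ⊆ interior (coneOn Φ σ) := by
    intro σ hσc hσi hxσ
    obtain ⟨hspan_top, rep_any, hclosed, hint, hfront⟩ := bs_pkg Φ hn hσc hσi
    obtain ⟨t, h0, hsupp, hteq⟩ := hxσ
    have hpos := rep_pos Φ hxreg hσc h0 hsupp hteq
    have hxint : x ∈ interior (coneOn Φ σ) := by
      rw [hteq]; exact hint t hsupp hpos
    have hdisj : Disjoint (interior (coneOn Φ σ)) (coneOn Φ σ)ᶜ :=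
      Set.disjoint_left.mpr fun {z} hz hz' => hz' (interior_subset hz)
    have hcov : c ⊆ interior (coneOn Φ σ) ∪ (coneOn Φ σ)ᶜ := by
      intro z hz
      by_cases hzc : z ∈ coneOn Φ σ
      · left
        by_contra hzint
        have hzf : z ∈ frontier (coneOn Φ σ) := by
          rw [hclosed.frontier_eq]; exact ⟨hzc, hzint⟩
        obtain ⟨k, hkσ, hzk⟩ := hfront z hzf
        have hck : (σ.erase k).card < n := by
          rw [Finset.card_erase_of_mem hkσ, hσc]; omega
        exact not_creg_of_mem Φ hck hzk (hcsub hz)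
      · right; exact hzc
    exact hcconn.subset_left_of_subset_union isOpen_interior hclosed.isOpen_compl
      hdisj hcov ⟨x, hcx, hxint⟩
  have hcont0 : Continuous (fun δ : ℝ => a + b + δ • u) :=
    continuous_const.add (continuous_id.smul continuous_const)
  have hJs : ∀ δ : ℝ, 0 < δ → δ ≤ ε → a + b + δ • u ∈ c := by
    have hconnseg : IsPreconnected ((fun δ : ℝ => a + b + δ • u) '' Set.Ioc 0 ε) :=
      isPreconnected_Ioc.image _ hcont0.continuousOn
    have hsub : ((fun δ : ℝ => a + b + δ • u) '' Set.Ioc 0 ε) ⊆ creg Φ := by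
      rintro z ⟨δ, hδ, rfl⟩; exact hseg δ hδ.1 hδ.2
    have hxin : x ∈ (fun δ : ℝ => a + b + δ • u) '' Set.Ioc 0 ε :=
      ⟨ε, ⟨hε0, le_rfl⟩, rfl⟩
    have hsubc := hconnseg.subset_connectedComponentIn hxin hsub
    intro δ h1 h2
    exact hsubc ⟨δ, ⟨h1, h2⟩, rfl⟩
  have hsclosure : (a + b) ∈ closure c := by
    have htend : Filter.Tendsto (fun δ : ℝ => a + b + δ • u)
        (nhdsWithin 0 (Set.Ioi 0)) (nhds (a + b)) := by
      have h := hcont0.tendsto 0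
      simp only [zero_smul, add_zero] at h
      exact h.mono_left nhdsWithin_le_nhds
    apply mem_closure_of_tendsto htend
    filter_upwards [Ioc_mem_nhdsGT_of_mem (Set.mem_Ico.mpr ⟨le_refl (0:ℝ), hε0⟩)] with δ hδ
    exact hJs δ hδ.1 hδ.2
  have hsσ : ∀ σ : Finset (Fin N), σ.card = n →
      LinearIndependent ℝ (fun i : σ => Φ i) → x ∈ coneOn Φ σ →
      a + b ∈ coneOn Φ σ := by
    intro σ h1 h2 h3
    have h4 := hchamber σ h1 h2 h3
    have hclosed := (bs_pkg Φ hn h1 h2).2.2.1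
    have h5 : closure c ⊆ coneOn Φ σ :=
      le_trans (closure_mono (h4.trans interior_subset)) hclosed.closure_eq.le
    exact h5 hsclosure
  have hsegment : ∀ p : Fin n → ℝ,
      (∀ σ : Finset (Fin N), σ.card = n → LinearIndependent ℝ (fun i : σ => Φ i) →
        x ∈ coneOn Φ σ → p ∈ coneOn Φ σ) →
      p ∈ closure c := by
    intro p hpσ
    have hJreg : ∀ θ : ℝ, 0 < θ → θ ≤ 1 → p + θ • (x - p) ∈ creg Φ := by
      intro θ h1 h2
      rw [mem_creg_iff]
      intro ν hν hmem
      refine claimD Φ hn v hv x hxreg τx hτxc hτxi hxτx (p + θ • (x - p)) ν hν hmem ?_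
      intro σ hσc hσi hxσ
      obtain ⟨tp, htp0, htpsupp, htpeq⟩ := hpσ σ hσc hσi hxσ
      obtain ⟨tx, htx0, htxsupp, htxeq⟩ := hxσ
      have htxpos := rep_pos Φ hxreg hσc htx0 htxsupp htxeq
      refine ⟨fun i => (1 - θ) * tp i + θ * tx i, ?_, ?_, ?_⟩
      · intro i hi
        dsimp only
        have h3 := mul_nonneg (by linarith : (0:ℝ) ≤ 1 - θ) (htp0 i)
        have h4 := mul_pos h1 (htxpos i hi)
        linarith
      · intro i hi
        dsimp only
        rw [htpsupp i hi, htxsupp i hi, mul_zero, mul_zero, add_zero]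
      · dsimp only
        have hgoal : ∑ i, ((1 - θ) * tp i + θ * tx i) • Φ i
            = (1 - θ) • ∑ i, tp i • Φ i + θ • ∑ i, tx i • Φ i := by
          rw [Finset.smul_sum, Finset.smul_sum, ← Finset.sum_add_distrib]
          exact Finset.sum_congr rfl fun i _ => by rw [add_smul, mul_smul, mul_smul]
        rw [hgoal, ← htpeq, ← htxeq]
        module
    have hcont1 : Continuous (fun θ : ℝ => p + θ • (x - p)) :=
      continuous_const.add (continuous_id.smul continuous_const)
    have hJsub : ((fun θ : ℝ => p + θ • (x - p)) '' Set.Ioc 0 1) ⊆ creg Φ := by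
      rintro z ⟨θ, hθ, rfl⟩; exact hJreg θ hθ.1 hθ.2
    have hJconn : IsPreconnected ((fun θ : ℝ => p + θ • (x - p)) '' Set.Ioc 0 1) :=
      isPreconnected_Ioc.image _ hcont1.continuousOn
    have hxJ : x ∈ (fun θ : ℝ => p + θ • (x - p)) '' Set.Ioc 0 1 :=
      ⟨1, ⟨one_pos, le_rfl⟩, by dsimp only; rw [one_smul]; abel⟩
    have hJc : ((fun θ : ℝ => p + θ • (x - p)) '' Set.Ioc 0 1) ⊆ c :=
      hJconn.subset_connectedComponentIn hxJ hJsub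
    have htend : Filter.Tendsto (fun θ : ℝ => p + θ • (x - p))
        (nhdsWithin 0 (Set.Ioi 0)) (nhds p) := by
      have h := hcont1.tendsto 0
      simp only [zero_smul, add_zero] at h
      exact h.mono_left nhdsWithin_le_nhds
    have hpJ : p ∈ closure ((fun θ : ℝ => p + θ • (x - p)) '' Set.Ioc 0 1) := by
      apply mem_closure_of_tendsto htend
      filter_upwards [Ioc_mem_nhdsGT_of_mem (Set.mem_Ico.mpr ⟨le_refl (0:ℝ), one_pos⟩)]
        with θ hθ
      exact ⟨θ, hθ, rfl⟩
    exact closure_mono hJc hpJ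
  refine ⟨c, x, hxreg, hcdef, ?_, ?_, ?_⟩
  · intro z hz
    exact coneOn_mono Φ (Finset.subset_univ τx)
      (interior_subset (hchamber τx hτxc hτxi hxτx hz))
  · exact hsegment a (fun σ h1 h2 h3 => (hinh σ (hsσ σ h1 h2 h3)).1)
  · exact hsegment b (fun σ h1 h2 h3 => (hinh σ (hsσ σ h1 h2 h3)).2)
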